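/- Let N ≥ 1 and L ≥ 1 be natural numbers, let x : Fin L → ZMod N be inputs, and let r : Fin L → Fin L → ZMod N be pairwise masks satisfying r i i = 0 for all i and r i j + r j i = 0 for all i, j. Define the masked values x̃_i = x_i + Σ_{j ≠ i} r i j. Then Σ_{i} x̃_i = Σ_{i} x_i in ZMod N. -/

import Mathlib

open Finset

/- The swap `(i, j) ↦ (j, i)` pairs each mask with its negative; the diagonal must be assumed to
vanish separately, since antisymmetry alone only gives `2 • r i i = 0`. -/
theorem sum_sum_eq_zero_of_add_swap_eq_zero {ι M : Type*} [Fintype ι] [AddCommMonoid M]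
    (r : ι → ι → M) (hdiag : ∀ i, r i i = 0) (hanti : ∀ i j, r i j + r j i = 0) :
    ∑ i, ∑ j, r i j = 0 := by
  rw [← sum_product']
  refine sum_ninvolution Prod.swap (fun p => hanti p.1 p.2) (fun p hp hswap => hp ?_)
    (fun _ => mem_univ _) Prod.swap_swap
  rw [show p.1 = p.2 from congrArg Prod.snd hswap, hdiag]

theorem secure_aggregation_correct_general
    (N L : ℕ)
    (x : Fin L → ZMod N) (r : Fin L → Fin L → ZMod N)
    (hdiag : ∀ i, r i i = 0)
    (hanti : ∀ i j, r i j + r j i = 0) :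
    ∑ i, (x i + ∑ j ∈ Finset.univ.filter fun j => j ≠ i, r i j) = ∑ i, x i := by
  simp only [filter_ne', sum_erase _ (hdiag _), sum_add_distrib,
    sum_sum_eq_zero_of_add_swap_eq_zero r hdiag hanti, add_zero]

/-- Correctness of secure aggregation: if each participant `i` masks its input
`x_i` by adding pairwise masks `r i j` (over `j ≠ i`) satisfying `r i i = 0` and
`r i j + r j i = 0` in `ZMod N`, then the sum of the masked values equals the sum
of the inputs modulo `N`. -/
theorem secure_aggregation_correct
    (N L : ℕ) (hN : 1 ≤ N) (hL : 1 ≤ L)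
    (x : Fin L → ZMod N) (r : Fin L → Fin L → ZMod N)
    (hdiag : ∀ i, r i i = 0)
    (hanti : ∀ i j, r i j + r j i = 0) :
    ∑ i, (x i + ∑ j ∈ Finset.univ.filter fun j => j ≠ i, r i j) = ∑ i, x i :=
  secure_aggregation_correct_general N L x r hdiag hanti
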